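/- arXiv:2203.09850 — 5 statements merged into one kernel-verified Lean document; each statement's English description precedes it below -/
import Mathlib

section
/- Let ν be a Lévy measure with tail ν̄ and let T > 0. If f is absolutely continuous on [0,T], then the function t ↦ ∫_0^t ν̄(t−s)(f(s) − f(0)) ds is absolutely continuous on [0,T]; hence its derivative ∂_t^Φ f(t) exists for almost every t ∈ [0,T], satisfies ∂_t^Φ f(t) = ∫_0^t ν̄(t−s) f′(s) ds for almost every t ∈ [0,T], and the function t ↦ ∂_t^Φ f(t) belongs to L¹([0,T]). -/
/-!
With `K = 1_{(0,T]} ν̄` and `φ = 1_{(0,T]} f'`, the Lévy condition makes `ν̄` integrable near `0`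
(layer cake: `∫_0^T ν̄ ≤ ∫ min(u, T) dν(u)`), so `K ⋆ φ ∈ L¹(ℝ)`, and on `[0,T]` it is
`t ↦ ∫_0^t ν̄(t-s) f'(s) ds`. Fubini gives `∫_0^t (K ⋆ φ) = ∫ K(s) ∫_{-s}^{t-s} φ`, which is
`∫_0^t ν̄(t-s) (f(s) - f(0)) ds`. That function is thus the primitive of an `L¹` function, and
Lebesgue's differentiation theorem gives its derivative almost everywhere.
-/

open MeasureTheory Set

/-- The tail of a Lévy measure: `ν̄(s) = ν((s,∞))`. -/
noncomputable def nubar (ν : Measure ℝ) (s : ℝ) : ℝ := (ν (Set.Ioi s)).toReal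

/-- A Lévy measure on `(0,∞)`: it gives no mass to `(-∞,0]` and integrates `min(s,1)`. -/
def IsLevyMeasure (ν : Measure ℝ) : Prop :=
  ν (Set.Iic 0) = 0 ∧ ∫⁻ s in Set.Ioi (0:ℝ), ENNReal.ofReal (min s 1) ∂ν ≠ ⊤

open Filter ContinuousLinearMap
open scoped ENNReal Convolution

namespace IsLevyMeasure

variable {ν : Measure ℝ}

theorem setLIntegral_measure_Ioi_lt_top (hν : IsLevyMeasure ν) (T : ℝ) :
    ∫⁻ s in Ioo 0 T, ν (Ioi s) < ∞ := by
  rcases le_or_gt T 0 with hT | hT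
  · simp [Ioo_eq_empty_of_le hT]
  set μ := ν.restrict (Ioi 0)
  have hpos : ∀ᵐ u ∂μ, 0 < u := ae_restrict_mem measurableSet_Ioi
  have hmin_le (u : ℝ) (hu : 0 < u) : min u T ≤ max T 1 * min u 1 := by
    rcases le_total u 1 with h | h <;> simp only [h, min_eq_left, min_eq_right] <;>
      nlinarith [le_max_left T 1, le_max_right T 1, min_le_left u T, min_le_right u T]
  have hlayer := lintegral_eq_lintegral_meas_lt μ (f := fun u => min u T)
    (hpos.mono fun u hu => le_min hu.le hT.le) (measurable_id.min measurable_const).aemeasurable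
  calc ∫⁻ s in Ioo 0 T, ν (Ioi s)
      = ∫⁻ s in Ioo 0 T, μ {u | s < min u T} := by
        refine setLIntegral_congr_fun measurableSet_Ioo fun s hs => ?_
        have : {u | s < min u T} = Ioi s := by ext u; simp [hs.2]
        rw [this, Measure.restrict_apply measurableSet_Ioi,
          inter_eq_self_of_subset_left (Ioi_subset_Ioi hs.1.le)]
    _ ≤ ∫⁻ s in Ioi 0, μ {u | s < min u T} := lintegral_mono_set Ioo_subset_Ioi_self
    _ = ∫⁻ u, ENNReal.ofReal (min u T) ∂μ := hlayer.symm
    _ ≤ ∫⁻ u, ENNReal.ofReal (max T 1) * ENNReal.ofReal (min u 1) ∂μ := by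
        refine lintegral_mono_ae (hpos.mono fun u hu => ?_)
        rw [← ENNReal.ofReal_mul (by positivity)]
        exact ENNReal.ofReal_le_ofReal (hmin_le u hu)
    _ < ∞ := by
        rw [lintegral_const_mul' _ _ ENNReal.ofReal_ne_top]
        exact ENNReal.mul_lt_top ENNReal.ofReal_lt_top hν.2.lt_top

theorem integrableOn_nubar (hν : IsLevyMeasure ν) (T : ℝ) : IntegrableOn (nubar ν) (Ioc 0 T) := by
  rw [integrableOn_Ioc_iff_integrableOn_Ioo]
  have hmeas : Measurable fun s => ν (Ioi s) :=
    Antitone.measurable fun _ _ hab => measure_mono (Ioi_subset_Ioi hab)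
  exact integrable_toReal_of_lintegral_ne_top hmeas.aemeasurable
    (hν.setLIntegral_measure_Ioi_lt_top T).ne

end IsLevyMeasure

theorem intervalIntegral_convolution {f g : ℝ → ℝ} (hf : Integrable f) (hg : Integrable g)
    (a b : ℝ) : ∫ x in a..b, (f ⋆ g) x = ∫ s, f s * ∫ x in (a - s)..(b - s), g x := by
  have hle {a b : ℝ} (hab : a ≤ b) :
      ∫ x in a..b, (f ⋆ g) x = ∫ s, f s * ∫ x in (a - s)..(b - s), g x := by
    have hint : Integrable (Function.uncurry fun x s => f s * g (x - s))
        ((volume.restrict (Ioc a b)).prod volume) := by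
      rw [Measure.restrict_prod_eq_prod_univ]
      exact (hf.convolution_integrand (lsmul ℝ ℝ) hg).restrict
    simp only [intervalIntegral.integral_of_le hab, convolution_lsmul, smul_eq_mul]
    rw [integral_integral_swap hint]
    congr 1 with s
    rw [integral_const_mul, ← intervalIntegral.integral_of_le hab,
      intervalIntegral.integral_comp_sub_right]
  rcases le_total a b with hab | hba
  · exact hle hab
  · rw [intervalIntegral.integral_symm, hle hba, ← integral_neg]
    simp only [intervalIntegral.integral_symm (b - _), mul_neg]

theorem convolution_indicator_Ioc_apply {k g : ℝ → ℝ} {T r : ℝ} (hr : r ∈ Icc 0 T) :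
    ((Ioc 0 T).indicator k ⋆ (Ioc 0 T).indicator g) r = ∫ s in 0..r, k (r - s) * g s := by
  have hsupp : ∀ s, (Ioc 0 T).indicator k s • (Ioc 0 T).indicator g (r - s) =
      (Ioo 0 r).indicator (fun s => k s * g (r - s)) s := by
    intro s
    simp only [indicator_apply, mem_Ioc, mem_Ioo, smul_eq_mul]
    split_ifs <;> first | rfl | (exfalso; grind) | simp
  rw [convolution_lsmul]
  simp only [hsupp, integral_indicator measurableSet_Ioo, ← integral_Ioc_eq_integral_Ioo,
    ← intervalIntegral.integral_of_le hr.1]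
  simpa using (intervalIntegral.integral_comp_sub_left (a := 0) (b := r)
    (fun s => k s * g (r - s)) r).symm

theorem intervalIntegral_indicator_Ioc_of_nonpos (g : ℝ → ℝ) {T x : ℝ} (hx : x ≤ 0) :
    ∫ u in 0..x, (Ioc 0 T).indicator g u = 0 := by
  rw [intervalIntegral.integral_congr (g := fun _ => 0) ?_, intervalIntegral.integral_zero]
  intro u hu
  rw [uIcc_of_ge hx] at hu
  exact indicator_of_notMem (fun h => h.1.not_ge hu.2) g

theorem intervalIntegral_indicator_Ioc_of_mem (g : ℝ → ℝ) {T x : ℝ} (hx : x ∈ Icc 0 T) :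
    ∫ u in 0..x, (Ioc 0 T).indicator g u = ∫ u in 0..x, g u := by
  simp only [intervalIntegral.integral_of_le hx.1]
  exact setIntegral_congr_fun measurableSet_Ioc fun u hu =>
    indicator_of_mem (show u ∈ Ioc 0 T from ⟨hu.1, hu.2.trans hx.2⟩) g

theorem integral_indicator_Ioc_mul_intervalIntegral_sub {k g : ℝ → ℝ} {T t : ℝ}
    (ht : t ∈ Icc 0 T) (hg : IntegrableOn g (Ioc 0 T)) :
    ∫ s, (Ioc 0 T).indicator k s * ∫ x in (0 - s)..(t - s), (Ioc 0 T).indicator g x =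
      ∫ s in 0..t, k (t - s) * ∫ x in 0..s, g x := by
  have hgi : Integrable ((Ioc 0 T).indicator g) := hg.integrable_indicator measurableSet_Ioc
  have hsupp : ∀ s,
      (Ioc 0 T).indicator k s * ∫ x in (0 - s)..(t - s), (Ioc 0 T).indicator g x =
        (Ioc 0 t).indicator (fun s => k s * ∫ x in 0..(t - s), g x) s := by
    intro s
    rw [← intervalIntegral.integral_interval_sub_left hgi.intervalIntegrable
      hgi.intervalIntegrable]
    by_cases hs : s ∈ Ioc 0 t
    · rw [indicator_of_mem hs, indicator_of_mem (show s ∈ Ioc 0 T from ⟨hs.1, hs.2.trans ht.2⟩),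
        intervalIntegral_indicator_Ioc_of_nonpos g (x := 0 - s) (by linarith [hs.1]),
        intervalIntegral_indicator_Ioc_of_mem g ⟨sub_nonneg.2 hs.2, by linarith [hs.1, ht.2]⟩,
        sub_zero]
    · rw [indicator_of_notMem hs]
      rcases le_or_gt s 0 with h0 | h0
      · rw [indicator_of_notMem (fun h => h.1.not_ge h0), zero_mul]
      · have hts : t - s ≤ 0 := by grind
        rw [intervalIntegral_indicator_Ioc_of_nonpos g hts,
          intervalIntegral_indicator_Ioc_of_nonpos g (by linarith), sub_self, mul_zero]
  simp only [hsupp, integral_indicator measurableSet_Ioc, ← intervalIntegral.integral_of_le ht.1]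
  simpa using (intervalIntegral.integral_comp_sub_left (a := 0) (b := t)
    (fun s => k s * ∫ x in 0..(t - s), g x) t).symm

theorem stmt_0_general (ν : Measure ℝ) (hν : IsLevyMeasure ν)
    (T : ℝ) (f f' : ℝ → ℝ)
    (hf'int : MeasureTheory.IntegrableOn f' (Set.Icc 0 T))
    (hfAC : ∀ t ∈ Set.Icc (0:ℝ) T, f t = f 0 + ∫ s in (0:ℝ)..t, f' s) :
    MeasureTheory.IntegrableOn
        (fun t => ∫ s in (0:ℝ)..t, nubar ν (t - s) * f' s) (Set.Icc 0 T)
      ∧ (∀ t ∈ Set.Icc (0:ℝ) T,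
          (∫ s in (0:ℝ)..t, nubar ν (t - s) * (f s - f 0))
            = ∫ r in (0:ℝ)..t, (∫ s in (0:ℝ)..r, nubar ν (r - s) * f' s))
      ∧ (∀ᵐ t ∂(volume.restrict (Set.Icc (0:ℝ) T)),
          HasDerivAt (fun τ => ∫ s in (0:ℝ)..τ, nubar ν (τ - s) * (f s - f 0))
            (∫ s in (0:ℝ)..t, nubar ν (t - s) * f' s) t) := by
  have hf'Ioc : IntegrableOn f' (Ioc 0 T) := hf'int.mono_set Ioc_subset_Icc_self
  have hK := (hν.integrableOn_nubar T).integrable_indicator measurableSet_Ioc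
  have hφ := hf'Ioc.integrable_indicator measurableSet_Ioc
  set G := (Ioc 0 T).indicator (nubar ν) ⋆ (Ioc 0 T).indicator f'
  have hG : Integrable G := hK.integrable_convolution (lsmul ℝ ℝ) hφ
  have hG_eq : ∀ r ∈ Icc 0 T, G r = ∫ s in 0..r, nubar ν (r - s) * f' s :=
    fun _ hr => convolution_indicator_Ioc_apply hr
  have hprim : ∀ t ∈ Icc 0 T,
      ∫ s in 0..t, nubar ν (t - s) * (f s - f 0) = ∫ r in 0..t, G r := by
    intro t ht
    rw [intervalIntegral_convolution hK hφ,
      integral_indicator_Ioc_mul_intervalIntegral_sub ht hf'Ioc]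
    refine intervalIntegral.integral_congr fun s hs => ?_
    rw [hfAC s (uIcc_subset_Icc (left_mem_Icc.2 (ht.1.trans ht.2)) ht hs), add_sub_cancel_left]
  refine ⟨hG.integrableOn.congr_fun hG_eq measurableSet_Icc, fun t ht => ?_, ?_⟩
  · rw [hprim t ht]
    exact intervalIntegral.integral_congr fun r hr =>
      hG_eq r (uIcc_subset_Icc (left_mem_Icc.2 (ht.1.trans ht.2)) ht hr)
  · rw [Measure.restrict_congr_set Ioo_ae_eq_Icc.symm]
    filter_upwards [ae_restrict_mem measurableSet_Ioo, ae_restrict_of_ae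
      (LocallyIntegrable.ae_hasDerivAt_integral hG.locallyIntegrable)] with t ht hderiv
    rw [← hG_eq t (Ioo_subset_Icc_self ht)]
    exact (hderiv 0).congr_of_eventuallyEq (eventually_of_mem (Icc_mem_nhds ht.1 ht.2) hprim)

/-- for `f` absolutely continuous on `[0,T]` (written via its FTC
representation with `f' ∈ L¹`), the function
`g(t) = ∫_0^t ν̄(t-s)(f(s)-f(0)) ds` is absolutely continuous on `[0,T]`
(i.e. it is the indefinite integral of the `L¹` function
`t ↦ ∫_0^t ν̄(t-s) f'(s) ds`), and hence `∂ₜ^Φ f (t)` exists for a.e. `t ∈ [0,T]`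
and equals `∫_0^t ν̄(t-s) f'(s) ds` there. -/
theorem stmt_0 (ν : Measure ℝ) (hν : IsLevyMeasure ν)
    (T : ℝ) (hT : 0 < T) (f f' : ℝ → ℝ)
    (hf'int : MeasureTheory.IntegrableOn f' (Set.Icc 0 T))
    (hfAC : ∀ t ∈ Set.Icc (0:ℝ) T, f t = f 0 + ∫ s in (0:ℝ)..t, f' s) :
    MeasureTheory.IntegrableOn
        (fun t => ∫ s in (0:ℝ)..t, nubar ν (t - s) * f' s) (Set.Icc 0 T)
      ∧ (∀ t ∈ Set.Icc (0:ℝ) T,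
          (∫ s in (0:ℝ)..t, nubar ν (t - s) * (f s - f 0))
            = ∫ r in (0:ℝ)..t, (∫ s in (0:ℝ)..r, nubar ν (r - s) * f' s))
      ∧ (∀ᵐ t ∂(volume.restrict (Set.Icc (0:ℝ) T)),
          HasDerivAt (fun τ => ∫ s in (0:ℝ)..τ, nubar ν (τ - s) * (f s - f 0))
            (∫ s in (0:ℝ)..t, nubar ν (t - s) * f' s) t) :=
  stmt_0_general ν hν T f f' hf'int hfAC
end

section
/- Let ν be a Lévy measure with tail ν̄, let T > 0 and f : [0,T] → ℝ. Suppose t₀ ∈ (0,T] is a maximum point of f on [0,T], that f is absolutely continuous on [0,t₀] with a.e. derivative f′ ∈ L¹(0,t₀), and that f is continuously differentiable on (0,t₀]. Then ∫_0^{t₀} ν̄(t₀−s) f′(s) ds ≥ 0, i.e. the non-local derivative of f at t₀ is non-negative. -/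
/-!
Writing `ν̄(t₀ - s) = ∫ 𝟙{t₀ - s < r} ν(dr)` and exchanging the order of integration,
`∫₀^{t₀} ν̄(t₀ - s) f'(s) ds = ∫ (f(t₀) - f(max(t₀ - r, 0))) ν(dr)`, and every integrand on the
right is non-negative because `t₀` is a maximum point of `f`.
-/

open MeasureTheory Set

open scoped ENNReal

namespace IsLevyMeasure

variable {ν : Measure ℝ}

theorem measure_Ioi_lt_top (hν : IsLevyMeasure ν) {ε : ℝ} (hε : 0 < ε) :
    ν (Ioi ε) < ⊤ := by
  have hmul_le : ENNReal.ofReal (min ε 1) * ν (Ioi ε)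
      ≤ ∫⁻ s in Ioi (0:ℝ), ENNReal.ofReal (min s 1) ∂ν :=
    calc ENNReal.ofReal (min ε 1) * ν (Ioi ε)
        = ∫⁻ _ in Ioi ε, ENNReal.ofReal (min ε 1) ∂ν := (setLIntegral_const _ _).symm
      _ ≤ ∫⁻ s in Ioi ε, ENNReal.ofReal (min s 1) ∂ν :=
          setLIntegral_mono (by fun_prop) fun _ hs =>
            ENNReal.ofReal_le_ofReal (min_le_min_right 1 (le_of_lt hs))
      _ ≤ ∫⁻ s in Ioi (0:ℝ), ENNReal.ofReal (min s 1) ∂ν :=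
          lintegral_mono_set (Ioi_subset_Ioi hε.le)
  have hc : ENNReal.ofReal (min ε 1) ≠ 0 := by simp [hε]
  exact ENNReal.lt_top_of_mul_ne_top_right (hmul_le.trans_lt hν.2.lt_top).ne hc

theorem sigmaFinite (hν : IsLevyMeasure ν) : SigmaFinite ν := by
  refine Measure.FiniteSpanningSetsIn.sigmaFinite (C := univ)
    ⟨fun n => Ioi (1 / (n + 1) : ℝ) ∪ Iic 0, fun _ => mem_univ _, fun n => ?_, ?_⟩
  · refine (measure_union_le _ _).trans_lt ?_
    rw [hν.1, add_zero]
    exact hν.measure_Ioi_lt_top (by positivity)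
  · refine eq_univ_of_forall fun x => mem_iUnion.2 ?_
    rcases le_or_gt x 0 with hx | hx
    · exact ⟨0, Or.inr hx⟩
    · obtain ⟨n, hn⟩ := exists_nat_one_div_lt hx
      exact ⟨n, Or.inl hn⟩

theorem ae_pos (hν : IsLevyMeasure ν) : ∀ᵐ r ∂ν, 0 < r := by
  rw [ae_iff]
  simpa [not_lt, Iic_def] using hν.1

end IsLevyMeasure

section Fubini

variable {ν μ : Measure ℝ} {g : ℝ → ℝ} {t : ℝ}

theorem aestronglyMeasurable_indicator_sub_lt (hg : AEStronglyMeasurable g μ) :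
    AEStronglyMeasurable ({p : ℝ × ℝ | t - p.1 < p.2}.indicator fun p => g p.1) (μ.prod ν) :=
  hg.comp_fst.indicator (measurableSet_lt (by fun_prop) (by fun_prop))

theorem integral_indicator_sub_lt (s : ℝ) :
    ∫ r, {p : ℝ × ℝ | t - p.1 < p.2}.indicator (fun p => g p.1) (s, r) ∂ν
      = nubar ν (t - s) * g s := by
  change ∫ r, (Ioi (t - s)).indicator (fun _ => g s) r ∂ν = _
  rw [integral_indicator_const (g s) measurableSet_Ioi, smul_eq_mul]
  rfl

theorem lintegral_enorm_indicator_sub_lt {s : ℝ} (hs : ν (Ioi (t - s)) ≠ ⊤) :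
    ∫⁻ r, ‖{p : ℝ × ℝ | t - p.1 < p.2}.indicator (fun p => g p.1) (s, r)‖ₑ ∂ν
      = ‖nubar ν (t - s) * g s‖ₑ := by
  change ∫⁻ r, ‖(Ioi (t - s)).indicator (fun _ => g s) r‖ₑ ∂ν = _
  simp_rw [enorm_indicator_eq_indicator_enorm]
  rw [lintegral_indicator measurableSet_Ioi, setLIntegral_const, enorm_mul, nubar,
    Real.enorm_of_nonneg ENNReal.toReal_nonneg, ENNReal.ofReal_toReal hs, mul_comm]

theorem integral_nubar_sub_mul_eq_integral_integral [SigmaFinite ν] [SigmaFinite μ]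
    (hg : AEStronglyMeasurable g μ) (hfin : ∀ᵐ s ∂μ, ν (Ioi (t - s)) ≠ ⊤)
    (hint : Integrable (fun s => nubar ν (t - s) * g s) μ) :
    ∫ s, nubar ν (t - s) * g s ∂μ = ∫ r, ∫ s in Ioi (t - r), g s ∂μ ∂ν := by
  set F := {p : ℝ × ℝ | t - p.1 < p.2}.indicator fun p => g p.1
  have hFme : AEStronglyMeasurable F (μ.prod ν) := aestronglyMeasurable_indicator_sub_lt hg
  have hFint : Integrable F (μ.prod ν) := by
    refine ⟨hFme, ?_⟩
    rw [hasFiniteIntegral_iff_enorm, lintegral_prod _ hFme.enorm]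
    refine (lintegral_congr_ae ?_).trans_lt hint.2
    filter_upwards [hfin] with s hs using lintegral_enorm_indicator_sub_lt hs
  have hfiber : ∀ r, ∫ s, F (s, r) ∂μ = ∫ s in Ioi (t - r), g s ∂μ := fun r => by
    rw [← integral_indicator measurableSet_Ioi]
    congr 1 with s
    simp [F, indicator_apply, sub_lt_comm]
  simp_rw [← integral_indicator_sub_lt (ν := ν), ← hfiber]
  exact integral_integral_swap hFint

end Fubini

theorem intervalIntegral_eq_sub_of_eq_add_integral {f f' : ℝ → ℝ} {c b : ℝ}
    (hf' : IntegrableOn f' (Icc c b)) (hf : ∀ t ∈ Icc c b, f t = f c + ∫ s in c..t, f' s)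
    {a : ℝ} (ha : a ∈ Icc c b) : ∫ s in a..b, f' s = f b - f a := by
  have hcb : c ≤ b := ha.1.trans ha.2
  have hii : ∀ x ∈ Icc c b, IntervalIntegrable f' volume c x := fun x hx =>
    (hf'.mono_set (by rw [uIcc_of_le hx.1]; exact Icc_subset_Icc_right hx.2)).intervalIntegrable
  rw [← intervalIntegral.integral_interval_sub_left (hii b ⟨hcb, le_rfl⟩) (hii a ha),
    hf b ⟨hcb, le_rfl⟩, hf a ha]
  ring

theorem setIntegral_Ioo_Ioi_eq_intervalIntegral {g : ℝ → ℝ} {t r : ℝ} (ht : 0 ≤ t)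
    (hr : 0 ≤ r) :
    ∫ s in Ioi (t - r), g s ∂(volume.restrict (Ioo 0 t))
      = ∫ s in max (t - r) 0..t, g s := by
  rw [Measure.restrict_restrict measurableSet_Ioi, Ioi_inter_Ioo,
    intervalIntegral.integral_of_le (max_le (by linarith) ht), integral_Ioc_eq_integral_Ioo]

theorem stmt_2_general (ν : Measure ℝ) (hν : IsLevyMeasure ν)
    (T : ℝ) (f f' : ℝ → ℝ) (t₀ : ℝ)
    (ht₀ : t₀ ∈ Set.Ioc (0:ℝ) T)
    (hmax : ∀ t ∈ Set.Icc (0:ℝ) T, f t ≤ f t₀)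
    (hf'int : MeasureTheory.IntegrableOn f' (Set.Icc 0 t₀))
    (hfAC : ∀ t ∈ Set.Icc (0:ℝ) t₀, f t = f 0 + ∫ s in (0:ℝ)..t, f' s) :
    0 ≤ ∫ s in (0:ℝ)..t₀, nubar ν (t₀ - s) * f' s := by
  obtain ⟨ht₀pos, ht₀T⟩ := ht₀
  have := hν.sigmaFinite
  rw [intervalIntegral.integral_of_le ht₀pos.le, integral_Ioc_eq_integral_Ioo]
  by_cases hint : IntegrableOn (fun s => nubar ν (t₀ - s) * f' s) (Ioo 0 t₀)
  swap
  · -- the Bochner integral of a non-integrable function is `0`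
    rw [integral_undef hint]
  have hfin : ∀ᵐ s ∂volume.restrict (Ioo 0 t₀), ν (Ioi (t₀ - s)) ≠ ⊤ := by
    filter_upwards [ae_restrict_mem measurableSet_Ioo] with s hs
    exact (hν.measure_Ioi_lt_top (sub_pos.2 hs.2)).ne
  rw [integral_nubar_sub_mul_eq_integral_integral
    (hf'int.mono_set Ioo_subset_Icc_self).aestronglyMeasurable hfin hint]
  refine integral_nonneg_of_ae ?_
  filter_upwards [hν.ae_pos] with r hr
  have ha : max (t₀ - r) 0 ∈ Icc 0 t₀ := ⟨le_max_right _ _, max_le (by linarith) ht₀pos.le⟩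
  rw [Pi.zero_apply, setIntegral_Ioo_Ioi_eq_intervalIntegral ht₀pos.le hr.le,
    intervalIntegral_eq_sub_of_eq_add_integral hf'int hfAC ha, sub_nonneg]
  exact hmax _ ⟨ha.1, ha.2.trans ht₀T⟩

/-- if `t₀ ∈ (0,T]` is a maximum point of `f` on `[0,T]`, `f` is absolutely
continuous on `[0,t₀]` with a.e. derivative `f' ∈ L¹(0,t₀)` and `f` is continuously
differentiable on `(0,t₀]`, then the non-local derivative of `f` at `t₀`, namely
`∫_0^{t₀} ν̄(t₀-s) f'(s) ds`, is non-negative. -/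
theorem stmt_2 (ν : Measure ℝ) (hν : IsLevyMeasure ν)
    (T : ℝ) (hT : 0 < T) (f f' : ℝ → ℝ) (t₀ : ℝ)
    (ht₀ : t₀ ∈ Set.Ioc (0:ℝ) T)
    (hmax : ∀ t ∈ Set.Icc (0:ℝ) T, f t ≤ f t₀)
    (hf'int : MeasureTheory.IntegrableOn f' (Set.Icc 0 t₀))
    (hfAC : ∀ t ∈ Set.Icc (0:ℝ) t₀, f t = f 0 + ∫ s in (0:ℝ)..t, f' s)
    (hC1 : ∀ t ∈ Set.Ioc (0:ℝ) t₀, HasDerivWithinAt f (f' t) (Set.Icc 0 t₀) t)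
    (hf'cont : ContinuousOn f' (Set.Ioc 0 t₀)) :
    0 ≤ ∫ s in (0:ℝ)..t₀, nubar ν (t₀ - s) * f' s :=
  stmt_2_general ν hν T f f' t₀ ht₀ hmax hf'int hfAC
end

section
/- Let ν be a Lévy measure with tail ν̄, let T > 0 and let f be a continuous function on [0,T]. Let t₀ be the smallest point of [0,T] at which f attains its maximum, and suppose t₀ > 0. Suppose that the non-local derivative ∂_t^Φ f(t) := (d/dt) ∫_0^t ν̄(t−s)(f(s) − f(0)) ds is well-defined and continuous on an open interval I ⊂ (0,T) containing t₀. Then ∂_t^Φ f(t₀) ≥ 0. -/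
/-!
Write `g = ν̄ ⋆ F`, where `F = f - f 0` is extended by `0` to the past, so that `g' = D` near
`t₀`. If `D t₀ < 0`, then `g` decreases at a definite rate just left of `t₀`. The trailing
integrals `Φ = ∫₀ʰ F(· - σ) dσ` are Lipschitz, commute with the convolution, and, because `t₀` is
the *first* maximum point of `f`, their maximum point `τ` on `[0, t₀]` is close to `t₀` for
small `h`. At a maximum point, a nonincreasing kernel gives the one-sided bound
`(ν̄ ⋆ Φ)(τ) - (ν̄ ⋆ Φ)(τ - r) ≥ -2Cr ∫₀ʳ ν̄ = o(r)`, with `C` a bound for `|F|`, whereas the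
decrease of `g` forces this difference below `h r D t₀ / 2`: a contradiction for small `r`.
-/

open MeasureTheory Set

open Filter Topology

noncomputable def causalConv (k F : ℝ → ℝ) (t : ℝ) : ℝ :=
  ∫ s in (0:ℝ)..t, k (t - s) * F s

noncomputable def trailingIntegral (h : ℝ) (F : ℝ → ℝ) (w : ℝ) : ℝ :=
  ∫ σ in (0:ℝ)..h, F (w - σ)

structure IsAntitoneKernel (k : ℝ → ℝ) : Prop where
  nonneg : ∀ x, 0 ≤ k x
  antitoneOn : AntitoneOn k (Ioi 0)
  integrableOn : ∀ c, IntegrableOn k (Ioc 0 c)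

section Kernel

variable {k : ℝ → ℝ}

lemma intervalIntegrable_of_integrableOn_Ioc (hk : ∀ c, IntegrableOn k (Ioc 0 c)) {u v : ℝ}
    (hu : 0 ≤ u) (hv : 0 ≤ v) :
    IntervalIntegrable k volume u v :=
  ((intervalIntegrable_iff_integrableOn_Ioc_of_le hu).2 (hk u)).symm.trans
    ((intervalIntegrable_iff_integrableOn_Ioc_of_le hv).2 (hk v))

lemma intervalIntegrable_comp_sub_left_of_integrableOn_Ioc
    (hk : ∀ c, IntegrableOn k (Ioc 0 c)) {t u v : ℝ} (hu : u ≤ t) (hv : v ≤ t) :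
    IntervalIntegrable (fun w => k (t - w)) volume u v := by
  have h := (intervalIntegrable_of_integrableOn_Ioc hk (sub_nonneg.2 hu)
    (sub_nonneg.2 hv)).comp_sub_left t
  rwa [sub_sub_cancel, sub_sub_cancel] at h

lemma intervalIntegrable_comp_sub_left_mul (hk : ∀ c, IntegrableOn k (Ioc 0 c)) {G : ℝ → ℝ}
    (hG : Continuous G) {t u v : ℝ} (hu : u ≤ t) (hv : v ≤ t) :
    IntervalIntegrable (fun w => k (t - w) * G w) volume u v :=
  (intervalIntegrable_comp_sub_left_of_integrableOn_Ioc hk hu hv).mul_continuousOn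
    hG.continuousOn

lemma exists_integral_lt (hk : ∀ c, IntegrableOn k (Ioc 0 c)) {ε r₀ : ℝ} (hε : 0 < ε)
    (hr₀ : 0 < r₀) :
    ∃ r ∈ Ioc 0 r₀, ∫ x in (0:ℝ)..r, k x < ε := by
  have hcont : ContinuousWithinAt (fun r => ∫ x in (0:ℝ)..r, k x) (Ioi 0) 0 :=
    ((intervalIntegral.continuousOn_primitive_interval'
      (intervalIntegrable_of_integrableOn_Ioc hk le_rfl hr₀.le) left_mem_uIcc) 0
      left_mem_uIcc).mono_of_mem_nhdsWithin
      (by simpa [uIcc_of_le hr₀.le] using Icc_mem_nhdsGT hr₀)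
  have hlim : Tendsto (fun r => ∫ x in (0:ℝ)..r, k x) (𝓝[>] 0) (𝓝 0) := by
    simpa using hcont.tendsto
  obtain ⟨r, hr, hr'⟩ := ((hlim.eventually (gt_mem_nhds hε)).and (Ioc_mem_nhdsGT hr₀)).exists
  exact ⟨r, hr', hr⟩

end Kernel

section TrailingIntegral

variable {F : ℝ → ℝ} {h : ℝ}

lemma Continuous.trailingIntegral (hF : Continuous F) : Continuous (trailingIntegral h F) := by
  unfold _root_.trailingIntegral
  fun_prop

lemma trailingIntegral_le (hF : Continuous F) (hh : 0 ≤ h) {w M : ℝ}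
    (hM : ∀ σ ∈ Icc 0 h, F (w - σ) ≤ M) : trailingIntegral h F w ≤ h * M := by
  have := intervalIntegral.integral_mono_on (μ := volume) hh
    ((hF.comp (continuous_const.sub continuous_id)).intervalIntegrable _ _)
    intervalIntegrable_const hM
  simpa [trailingIntegral, mul_comm] using this

lemma le_trailingIntegral (hF : Continuous F) (hh : 0 ≤ h) {w M : ℝ}
    (hM : ∀ σ ∈ Icc 0 h, M ≤ F (w - σ)) : h * M ≤ trailingIntegral h F w := by
  have := intervalIntegral.integral_mono_on (μ := volume) hh intervalIntegrable_const
    ((hF.comp (continuous_const.sub continuous_id)).intervalIntegrable _ _) hM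
  simpa [trailingIntegral, mul_comm] using this

lemma trailingIntegral_sub_le (hF : Continuous F) (hh : 0 ≤ h) {C x y : ℝ} (hxy : x ≤ y)
    (hC : ∀ u ∈ Icc (x - h) y, |F u| ≤ C) :
    trailingIntegral h F y - trailingIntegral h F x ≤ 2 * C * (y - x) := by
  have hI : ∀ a b, IntervalIntegrable F volume a b := fun a b => hF.intervalIntegrable a b
  have hrepr : ∀ w, trailingIntegral h F w = ∫ u in (w - h)..w, F u := fun w => by
    simp [trailingIntegral, intervalIntegral.integral_comp_sub_left]
  have hbound : ∀ a b, x - h ≤ a → a ≤ b → b ≤ y → |∫ u in a..b, F u| ≤ C * (b - a) := by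
    intro a b ha hab hb
    have := intervalIntegral.norm_integral_le_of_norm_le_const (a := a) (b := b) (C := C)
      fun u hu => by
        rw [uIoc_of_le hab] at hu
        exact (Real.norm_eq_abs _).trans_le (hC u ⟨by linarith [hu.1], hu.2.trans hb⟩)
    rwa [Real.norm_eq_abs, abs_of_nonneg (sub_nonneg.2 hab)] at this
  rw [hrepr, hrepr, intervalIntegral.integral_interval_sub_interval_comm (hI _ _) (hI _ _)
    (hI _ _), intervalIntegral.integral_symm (x - h), intervalIntegral.integral_symm x]
  have h1 := abs_le.1 (hbound x y (by linarith) hxy le_rfl)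
  have h2 := abs_le.1 (hbound (x - h) (y - h) le_rfl (by linarith) (by linarith))
  linarith [h1.2, h2.1]

end TrailingIntegral

section CausalConv

variable {k F : ℝ → ℝ}

lemma causalConv_comp_sub (hk : ∀ c, IntegrableOn k (Ioc 0 c)) (hF : Continuous F)
    (hF0 : ∀ x ≤ 0, F x = 0) {t σ : ℝ} (hσ : 0 ≤ σ) (hσt : σ ≤ t) :
    causalConv k F (t - σ) = ∫ w in (0:ℝ)..t, k (t - w) * F (w - σ) := by
  have hint : ∀ u v, u ≤ t → v ≤ t →
      IntervalIntegrable (fun w => k (t - w) * F (w - σ)) volume u v := fun u v hu hv =>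
    intervalIntegrable_comp_sub_left_mul hk (hF.comp (continuous_id.sub continuous_const)) hu hv
  have hshift : causalConv k F (t - σ) = ∫ w in σ..t, k (t - w) * F (w - σ) := by
    have := intervalIntegral.integral_comp_sub_right
      (fun s => k (t - σ - s) * F s) σ (a := σ) (b := t)
    simp only [sub_self, sub_sub_sub_cancel_right] at this
    rw [causalConv, ← this]
  have hpast : ∫ w in (0:ℝ)..σ, k (t - w) * F (w - σ) = 0 := by
    refine (intervalIntegral.integral_congr fun w hw => ?_).trans intervalIntegral.integral_zero
    rw [uIcc_of_le hσ] at hw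
    simp [hF0 (w - σ) (by linarith [hw.2])]
  rw [hshift, ← intervalIntegral.integral_add_adjacent_intervals (hint 0 σ (by linarith) hσt)
    (hint σ t hσt le_rfl), hpast, zero_add]

lemma trailingIntegral_causalConv (hk : ∀ c, IntegrableOn k (Ioc 0 c)) (hF : Continuous F)
    (hF0 : ∀ x ≤ 0, F x = 0) {h t : ℝ} (hh : 0 ≤ h) (hht : h ≤ t) :
    trailingIntegral h (causalConv k F) t = causalConv k (trailingIntegral h F) t := by
  have ht : 0 ≤ t := hh.trans hht
  have hprod : IntegrableOn (Function.uncurry fun σ w => k (t - w) * F (w - σ))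
      (uIoc 0 h ×ˢ uIoc 0 t) := by
    have hkt : Integrable (fun w => k (t - w)) (volume.restrict (Ioc 0 t)) :=
      (intervalIntegrable_iff_integrableOn_Ioc_of_le ht).1
        (intervalIntegrable_comp_sub_left_of_integrableOn_Ioc hk ht le_rfl)
    rw [uIoc_of_le hh, uIoc_of_le ht]
    refine IntegrableOn.mul_continuousOn_of_subset (K := Icc 0 h ×ˢ Icc 0 t) ?_
      (by fun_prop) (measurableSet_Ioc.prod measurableSet_Ioc)
      (isCompact_Icc.prod isCompact_Icc) (prod_mono Ioc_subset_Icc_self Ioc_subset_Icc_self)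
    rw [IntegrableOn, Measure.volume_eq_prod, ← Measure.prod_restrict]
    exact hkt.comp_snd _
  calc trailingIntegral h (causalConv k F) t
      = ∫ σ in (0:ℝ)..h, ∫ w in (0:ℝ)..t, k (t - w) * F (w - σ) := by
        refine intervalIntegral.integral_congr fun σ hσ => ?_
        rw [uIcc_of_le hh] at hσ
        exact causalConv_comp_sub hk hF hF0 hσ.1 (hσ.2.trans hht)
    _ = ∫ w in (0:ℝ)..t, ∫ σ in (0:ℝ)..h, k (t - w) * F (w - σ) :=
        intervalIntegral_intervalIntegral_swap hprod
    _ = causalConv k (trailingIntegral h F) t := by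
        simp only [intervalIntegral.integral_const_mul, causalConv, trailingIntegral]

lemma IsAntitoneKernel.mul_le_integral_sub_causalConv (hk : IsAntitoneKernel k)
    {Φ : ℝ → ℝ} (hΦ : Continuous Φ) {τ r Λ : ℝ} (hr : 0 ≤ r) (hrτ : r ≤ τ)
    (hΛ : ∀ w ∈ Icc 0 (τ - r), Φ w ≤ Λ) :
    ((∫ x in r..τ, k x) - ∫ x in (0:ℝ)..(τ - r), k x) * Λ ≤
      (∫ w in (0:ℝ)..(τ - r), k (τ - w) * Φ w) - causalConv k Φ (τ - r) := by
  have hτr : 0 ≤ τ - r := sub_nonneg.2 hrτ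
  have hKτ : IntervalIntegrable (fun w => k (τ - w)) volume 0 (τ - r) :=
    intervalIntegrable_comp_sub_left_of_integrableOn_Ioc hk.integrableOn (by linarith)
      (by linarith)
  have hKτr : IntervalIntegrable (fun w => k (τ - r - w)) volume 0 (τ - r) :=
    intervalIntegrable_comp_sub_left_of_integrableOn_Ioc hk.integrableOn hτr le_rfl
  have hKΦ : IntervalIntegrable (fun w => k (τ - w) * Φ w) volume 0 (τ - r) :=
    intervalIntegrable_comp_sub_left_mul hk.integrableOn hΦ (by linarith) (by linarith)
  have hKΦr : IntervalIntegrable (fun w => k (τ - r - w) * Φ w) volume 0 (τ - r) :=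
    intervalIntegrable_comp_sub_left_mul hk.integrableOn hΦ hτr le_rfl
  have hK1 : ∫ w in (0:ℝ)..(τ - r), k (τ - w) = ∫ x in r..τ, k x := by
    simp [intervalIntegral.integral_comp_sub_left]
  have hK2 : ∫ w in (0:ℝ)..(τ - r), k (τ - r - w) = ∫ x in (0:ℝ)..(τ - r), k x := by
    simp [intervalIntegral.integral_comp_sub_left]
  rw [← hK1, ← hK2, ← intervalIntegral.integral_sub hKτ hKτr,
    ← intervalIntegral.integral_mul_const, causalConv, ← intervalIntegral.integral_sub hKΦ hKΦr]
  refine intervalIntegral.integral_mono_on_of_le_Ioo hτr ((hKτ.sub hKτr).mul_const _)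
    (hKΦ.sub hKΦr) fun w hw => ?_
  have hk_le : k (τ - w) ≤ k (τ - r - w) :=
    hk.antitoneOn (show 0 < τ - r - w by linarith [hw.2]) (show 0 < τ - w by linarith [hw.2])
      (by linarith)
  have hΦw : Φ w ≤ Λ := hΛ w (Ioo_subset_Icc_self hw)
  nlinarith

lemma IsAntitoneKernel.neg_mul_integral_le_causalConv_sub (hk : IsAntitoneKernel k)
    {Φ : ℝ → ℝ} (hΦ : Continuous Φ) {τ r ε : ℝ} (hr : 0 ≤ r) (hrτ : r ≤ τ)
    (hmax : ∀ w ∈ Icc 0 τ, Φ w ≤ Φ τ) (hpos : 0 ≤ Φ τ)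
    (hnear : ∀ w ∈ Icc (τ - r) τ, Φ τ - ε ≤ Φ w) :
    -(ε * ∫ x in (0:ℝ)..r, k x) ≤ causalConv k Φ τ - causalConv k Φ (τ - r) := by
  have hτr : 0 ≤ τ - r := sub_nonneg.2 hrτ
  have hfar := hk.mul_le_integral_sub_causalConv hΦ hr hrτ fun w hw =>
    hmax w ⟨hw.1, by linarith [hw.2]⟩
  have hKΦ : ∀ u v, u ≤ τ → v ≤ τ →
      IntervalIntegrable (fun w => k (τ - w) * Φ w) volume u v :=
    fun u v => intervalIntegrable_comp_sub_left_mul hk.integrableOn hΦ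
  have hnear' : (Φ τ - ε) * ∫ x in (0:ℝ)..r, k x ≤ ∫ w in (τ - r)..τ, k (τ - w) * Φ w := by
    have hK3 : ∫ w in (τ - r)..τ, k (τ - w) = ∫ x in (0:ℝ)..r, k x := by
      simp [intervalIntegral.integral_comp_sub_left]
    rw [← hK3, mul_comm, ← intervalIntegral.integral_mul_const]
    refine intervalIntegral.integral_mono_on (by linarith)
      ((intervalIntegrable_comp_sub_left_of_integrableOn_Ioc hk.integrableOn (by linarith)
        le_rfl).mul_const _) (hKΦ _ _ (by linarith) le_rfl) fun w hw =>
      mul_le_mul_of_nonneg_left (hnear w hw) (hk.nonneg _)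
  have hsplit : causalConv k Φ τ = (∫ w in (0:ℝ)..(τ - r), k (τ - w) * Φ w) +
      ∫ w in (τ - r)..τ, k (τ - w) * Φ w :=
    (intervalIntegral.integral_add_adjacent_intervals (hKΦ _ _ (by linarith) (by linarith))
      (hKΦ _ _ (by linarith) le_rfl)).symm
  have hk' : ∀ u v, 0 ≤ u → 0 ≤ v → IntervalIntegrable k volume u v :=
    fun u v => intervalIntegrable_of_integrableOn_Ioc hk.integrableOn
  have htail : (∫ x in r..τ, k x) + (∫ x in (0:ℝ)..r, k x) - ∫ x in (0:ℝ)..(τ - r), k x =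
      ∫ x in (τ - r)..τ, k x := by
    rw [add_comm, intervalIntegral.integral_add_adjacent_intervals (hk' _ _ le_rfl hr)
      (hk' _ _ hr (by linarith)), intervalIntegral.integral_interval_sub_left
      (hk' _ _ le_rfl (by linarith)) (hk' _ _ le_rfl hτr)]
  have htail_nonneg : 0 ≤ ∫ x in (τ - r)..τ, k x :=
    intervalIntegral.integral_nonneg (by linarith) fun x _ => hk.nonneg x
  nlinarith

end CausalConv

lemma trailingIntegral_sub_le_of_deriv_le {g g' : ℝ → ℝ} {p q m h r τ : ℝ}
    (hg : ∀ x ∈ Icc p q, HasDerivAt g (g' x) x) (hg' : ∀ x ∈ Icc p q, g' x ≤ m)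
    (hh : 0 ≤ h) (hr : 0 ≤ r) (hp : p ≤ τ - r - h) (hq : τ ≤ q) :
    trailingIntegral h g τ - trailingIntegral h g (τ - r) ≤ h * (m * r) := by
  have hcont : ContinuousOn g (Icc p q) := fun x hx =>
    (hg x hx).continuousAt.continuousWithinAt
  have hmvt := (convex_Icc p q).image_sub_le_mul_sub_of_deriv_le hcont
    (fun x hx => (hg x (interior_subset hx)).differentiableAt.differentiableWithinAt)
    (fun x hx => (hg x (interior_subset hx)).deriv ▸ hg' x (interior_subset hx))
  have hint : ∀ d ∈ Icc 0 r, IntervalIntegrable (fun σ => g (τ - d - σ)) volume 0 h :=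
    fun d hd => ContinuousOn.intervalIntegrable (hcont.comp (by fun_prop) fun σ hσ => by
      rw [uIcc_of_le hh] at hσ
      exact ⟨by linarith [hσ.2, hd.2], by linarith [hσ.1, hd.1]⟩)
  have h0 := hint 0 ⟨le_rfl, hr⟩
  have hr' := hint r ⟨hr, le_rfl⟩
  simp only [sub_zero] at h0
  calc trailingIntegral h g τ - trailingIntegral h g (τ - r)
      = ∫ σ in (0:ℝ)..h, (g (τ - σ) - g (τ - r - σ)) :=
        (intervalIntegral.integral_sub h0 hr').symm
    _ ≤ ∫ _ in (0:ℝ)..h, m * r := by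
        refine intervalIntegral.integral_mono_on hh (h0.sub hr') intervalIntegrable_const
          fun σ hσ => ?_
        have := hmvt (τ - r - σ) ⟨by linarith [hσ.2], by linarith [hσ.1]⟩ (τ - σ)
          ⟨by linarith [hσ.2], by linarith [hσ.1]⟩ (by linarith)
        linarith
    _ = h * (m * r) := by rw [intervalIntegral.integral_const, smul_eq_mul, sub_zero]

lemma exists_forall_isMaxOn_trailingIntegral_gt {F : ℝ → ℝ} (hF : Continuous F) {t₀ δ : ℝ}
    (hδ : 0 < δ) (hδt₀ : δ ≤ t₀) (hfirst : ∀ s < t₀, F s < F t₀) :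
    ∃ h₀ > 0, ∀ h ∈ Ioc 0 h₀, ∀ τ ∈ Icc 0 t₀,
      IsMaxOn (trailingIntegral h F) (Icc 0 t₀) τ → t₀ - δ < τ := by
  obtain ⟨s₀, hs₀, hs₀max⟩ := (isCompact_Icc (a := -1) (b := t₀ - δ)).exists_isMaxOn
    (nonempty_Icc.2 (by linarith)) hF.continuousOn
  have hlt : F s₀ < F t₀ := hfirst s₀ (by linarith [hs₀.2])
  obtain ⟨η, hη, hηF⟩ := Metric.eventually_nhds_iff.1
    (hF.continuousAt.eventually (lt_mem_nhds (show (F s₀ + F t₀) / 2 < F t₀ by linarith)))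
  refine ⟨min (η / 2) 1, by positivity, fun h hh τ hτ hτmax => ?_⟩
  have hh1 : h ≤ 1 := hh.2.trans (min_le_right _ _)
  have hhη : h < η := by linarith [hh.2.trans (min_le_left _ _)]
  by_contra! hτle
  have hupper : trailingIntegral h F τ ≤ h * F s₀ :=
    trailingIntegral_le hF hh.1.le fun σ hσ =>
      isMaxOn_iff.1 hs₀max _ ⟨by linarith [hτ.1, hσ.2], by linarith [hσ.1]⟩
  have hlower : h * ((F s₀ + F t₀) / 2) ≤ trailingIntegral h F t₀ :=
    le_trailingIntegral hF hh.1.le fun σ hσ => by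
      have := hηF (y := t₀ - σ) (by
        rw [Real.dist_eq, abs_lt]; constructor <;> linarith [hσ.1, hσ.2])
      linarith
  have hτmax' := isMaxOn_iff.1 hτmax t₀ ⟨by linarith, le_rfl⟩
  nlinarith [hh.1]

lemma Continuous.exists_abs_le_on_Iic {F : ℝ → ℝ} (hF : Continuous F)
    (hF0 : ∀ x ≤ 0, F x = 0) (t₀ : ℝ) : ∃ C, ∀ u ≤ t₀, |F u| ≤ C := by
  obtain ⟨C, hC⟩ := (isCompact_Icc (a := 0) (b := t₀)).exists_bound_of_continuousOn
    hF.continuousOn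
  refine ⟨max C 0, fun u hu => ?_⟩
  rcases le_or_gt u 0 with hu0 | hu0
  · simp [hF0 u hu0]
  · exact (hC u ⟨hu0.le, hu⟩).trans (le_max_left _ _)

theorem IsAntitoneKernel.nonneg_of_hasDerivAt_causalConv {k F D : ℝ → ℝ}
    (hk : IsAntitoneKernel k) (hF : Continuous F) (hF0 : ∀ x ≤ 0, F x = 0) {t₀ : ℝ}
    (ht₀ : 0 < t₀) (hfirst : ∀ s < t₀, F s < F t₀)
    (hD : ∀ᶠ t in 𝓝 t₀, HasDerivAt (causalConv k F) (D t) t) (hDc : ContinuousAt D t₀) :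
    0 ≤ D t₀ := by
  by_contra! hneg
  obtain ⟨m, hDm, hm⟩ : ∃ m, D t₀ < m ∧ m < 0 := ⟨D t₀ / 2, by linarith, by linarith⟩
  obtain ⟨l, hlt₀, hwin⟩ := mem_nhdsLE_iff_exists_Icc_subset.1 <| nhdsWithin_le_nhds <|
    hD.and ((hDc.eventually (gt_mem_nhds hDm)).and (lt_mem_nhds ht₀))
  have hl : 0 < l := (hwin (left_mem_Icc.2 hlt₀.le)).2.2
  obtain ⟨C, hC⟩ := hF.exists_abs_le_on_Iic hF0 t₀
  have hC0 : 0 ≤ C := (abs_nonneg _).trans (hC 0 ht₀.le)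
  obtain ⟨h₀, hh₀, hτ_gt⟩ :=
    exists_forall_isMaxOn_trailingIntegral_gt hF (δ := (t₀ - l) / 2) (by linarith)
      (by linarith) hfirst
  obtain ⟨h, hh, hhh₀, hhl⟩ : ∃ h, 0 < h ∧ h ≤ h₀ ∧ h ≤ (t₀ - l) / 4 :=
    ⟨min h₀ ((t₀ - l) / 4), lt_min hh₀ (by linarith), min_le_left _ _, min_le_right _ _⟩
  obtain ⟨τ, hτ, hτmax⟩ := (isCompact_Icc (a := 0) (b := t₀)).exists_isMaxOn
    (nonempty_Icc.2 ht₀.le) hF.trailingIntegral.continuousOn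
  have hτl := hτ_gt h ⟨hh, hhh₀⟩ τ hτ hτmax
  have hΦτ : 0 ≤ trailingIntegral h F τ := by
    have := le_trailingIntegral hF hh.le (w := 0) (M := 0) fun σ hσ => by
      rw [hF0 _ (by linarith [hσ.1])]
    linarith [isMaxOn_iff.1 hτmax 0 ⟨le_rfl, ht₀.le⟩]
  obtain ⟨r, ⟨hr, hrl⟩, hkr⟩ := exists_integral_lt hk.integrableOn
    (show 0 < h * -m / (2 * C + 1) by have := neg_pos.2 hm; positivity)
    (show 0 < (t₀ - l) / 4 by linarith)
  have hlow := hk.neg_mul_integral_le_causalConv_sub (ε := 2 * C * r) hF.trailingIntegral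
    hr.le (by linarith) (fun w hw => isMaxOn_iff.1 hτmax w ⟨hw.1, hw.2.trans hτ.2⟩) hΦτ
    fun w hw => by
      have := trailingIntegral_sub_le hF hh.le hw.2 fun u hu => hC u (by linarith [hu.2, hτ.2])
      nlinarith [hw.1]
  rw [← trailingIntegral_causalConv hk.integrableOn hF hF0 hh.le (by linarith),
    ← trailingIntegral_causalConv hk.integrableOn hF hF0 hh.le (by linarith)] at hlow
  have hup := trailingIntegral_sub_le_of_deriv_le (fun x hx => (hwin hx).1)
    (fun x hx => (hwin hx).2.1.le) hh.le hr.le (by linarith) hτ.2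
  have hI0 : 0 ≤ ∫ x in (0:ℝ)..r, k x :=
    intervalIntegral.integral_nonneg hr.le fun x _ => hk.nonneg x
  have hkr' := (lt_div_iff₀ (by positivity)).1 hkr
  nlinarith [mul_lt_mul_of_pos_left hkr' hr]

namespace IsLevyMeasure

variable {ν : Measure ℝ}

lemma measure_Ioi_ne_top (hν : IsLevyMeasure ν) {s : ℝ} (hs : 0 < s) : ν (Ioi s) ≠ ⊤ := by
  have hmass : ENNReal.ofReal (min s 1) * ν (Ioi s) ≤
      ∫⁻ x in Ioi 0, ENNReal.ofReal (min x 1) ∂ν :=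
    calc ENNReal.ofReal (min s 1) * ν (Ioi s) = ∫⁻ _ in Ioi s, ENNReal.ofReal (min s 1) ∂ν :=
          (setLIntegral_const _ _).symm
      _ ≤ ∫⁻ x in Ioi s, ENNReal.ofReal (min x 1) ∂ν :=
          setLIntegral_mono (by fun_prop) fun x hx =>
            ENNReal.ofReal_le_ofReal (min_le_min_right 1 (le_of_lt hx))
      _ ≤ _ := lintegral_mono_set (Ioi_subset_Ioi hs.le)
  exact (ENNReal.lt_top_of_mul_ne_top_right (ne_top_of_le_ne_top hν.2 hmass)
    (ENNReal.ofReal_pos.2 (lt_min hs one_pos)).ne').ne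

-- By the layer-cake formula, `∫₀¹ ν̄ ≤ ∫ min(z, 1) ν(dz)`.
lemma lintegral_measure_Ioi_ne_top (hν : IsLevyMeasure ν) :
    ∫⁻ x in Ioo 0 1, ν (Ioi x) ≠ ⊤ := by
  have hcake := lintegral_eq_lintegral_meas_lt (ν.restrict (Ioi 0)) (f := fun z => min z 1)
    (ae_restrict_of_forall_mem measurableSet_Ioi fun z hz => le_min (le_of_lt hz) zero_le_one)
    (by fun_prop)
  refine ne_top_of_le_ne_top (hcake ▸ hν.2) ?_
  calc ∫⁻ x in Ioo 0 1, ν (Ioi x)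
      = ∫⁻ x in Ioo 0 1, ν.restrict (Ioi 0) {z | x < min z 1} :=
        setLIntegral_congr_fun measurableSet_Ioo fun x hx => by
          have hset : {z : ℝ | x < min z 1} = Ioi x := by
            ext z; simp [hx.2]
          rw [hset, Measure.restrict_apply measurableSet_Ioi,
            inter_eq_left.2 (Ioi_subset_Ioi hx.1.le)]
    _ ≤ _ := lintegral_mono_set Ioo_subset_Ioi_self

lemma isAntitoneKernel_nubar (hν : IsLevyMeasure ν) : IsAntitoneKernel (nubar ν) where
  nonneg _ := ENNReal.toReal_nonneg
  antitoneOn _ hx _ _ hxy :=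
    ENNReal.toReal_mono (hν.measure_Ioi_ne_top hx) (measure_mono (Ioi_subset_Ioi hxy))
  integrableOn c := by
    have hmeas : Measurable (nubar ν) :=
      (Antitone.measurable fun _ _ hxy => measure_mono (Ioi_subset_Ioi hxy)).ennreal_toReal
    have h01 : IntegrableOn (nubar ν) (Ioc 0 1) := by
      rw [integrableOn_Ioc_iff_integrableOn_Ioo]
      refine ⟨hmeas.aestronglyMeasurable, ?_⟩
      refine (lintegral_mono fun x => ?_).trans_lt hν.lintegral_measure_Ioi_ne_top.lt_top
      rw [Real.enorm_of_nonneg (show 0 ≤ nubar ν x from ENNReal.toReal_nonneg)]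
      exact ENNReal.ofReal_toReal_le
    have h1c : IntegrableOn (nubar ν) (Ioc 1 c) :=
      Measure.integrableOn_of_bounded (M := nubar ν 1) (by simp) hmeas.aestronglyMeasurable
        (ae_restrict_of_forall_mem measurableSet_Ioc fun x hx => by
          rw [Real.norm_of_nonneg (show 0 ≤ nubar ν x from ENNReal.toReal_nonneg)]
          exact ENNReal.toReal_mono (hν.measure_Ioi_ne_top one_pos)
            (measure_mono (Ioi_subset_Ioi hx.1.le)))
    exact (h01.union h1c).mono_set Ioc_subset_Ioc_union_Ioc

end IsLevyMeasure

/-- let `f` be continuous on `[0,T]`, `t₀ > 0` the smallest maximum point of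
`f` on `[0,T]`, and suppose the non-local derivative `∂ₜ^Φ f`
(the derivative `D` of `t ↦ ∫_0^t ν̄(t-s)(f(s)-f(0)) ds`) is well-defined and continuous
on an open interval `(a,b) ⊆ (0,T)` containing `t₀`. Then `∂ₜ^Φ f (t₀) ≥ 0`. -/
theorem stmt_3 (ν : Measure ℝ) (hν : IsLevyMeasure ν)
    (T : ℝ) (hT : 0 < T) (f : ℝ → ℝ)
    (hfcont : ContinuousOn f (Set.Icc 0 T))
    (t₀ : ℝ) (ht₀mem : t₀ ∈ Set.Icc (0:ℝ) T) (ht₀pos : 0 < t₀)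
    (hmax : ∀ t ∈ Set.Icc (0:ℝ) T, f t ≤ f t₀)
    (hfirst : ∀ t ∈ Set.Icc (0:ℝ) T, f t = f t₀ → t₀ ≤ t)
    (a b : ℝ) (hI : Set.Ioo a b ⊆ Set.Ioo 0 T) (ht₀I : t₀ ∈ Set.Ioo a b)
    (D : ℝ → ℝ)
    (hD : ∀ t ∈ Set.Ioo a b,
      HasDerivAt (fun τ => ∫ s in (0:ℝ)..τ, nubar ν (τ - s) * (f s - f 0)) (D t) t)
    (hDcont : ContinuousOn D (Set.Ioo a b)) :
    0 ≤ D t₀ := by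
  set F : ℝ → ℝ := fun x => f (projIcc 0 T hT.le x) - f 0
  have hFeq : ∀ x ∈ Icc 0 T, F x = f x - f 0 := fun x hx => by simp [F, projIcc_of_mem _ hx]
  have hF0 : ∀ x ≤ 0, F x = 0 := fun x hx => by simp [F, projIcc_of_le_left _ hx]
  have hF : Continuous F := (hfcont.comp_continuous (continuous_subtype_val.comp
    continuous_projIcc) fun x => (projIcc 0 T hT.le x).2).sub continuous_const
  have hlt : ∀ s ∈ Ico 0 t₀, f s < f t₀ := fun s hs =>
    have hsT : s ∈ Icc 0 T := ⟨hs.1, hs.2.le.trans ht₀mem.2⟩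
    (hmax s hsT).lt_of_ne fun he => (hfirst s hsT he).not_gt hs.2
  have hFfirst : ∀ s < t₀, F s < F t₀ := fun s hs => by
    rw [hFeq t₀ ht₀mem]
    rcases le_or_gt s 0 with hs0 | hs0
    · linarith [hF0 s hs0, hlt 0 ⟨le_rfl, ht₀pos⟩]
    · linarith [hFeq s ⟨hs0.le, hs.le.trans ht₀mem.2⟩, hlt s ⟨hs0.le, hs⟩]
  have hFD : ∀ᶠ t in 𝓝 t₀, HasDerivAt (causalConv (nubar ν) F) (D t) t := by
    filter_upwards [Ioo_mem_nhds ht₀I.1 ht₀I.2] with t ht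
    refine (hD t ht).congr_of_eventuallyEq ?_
    filter_upwards [Ioo_mem_nhds (hI ht).1 (hI ht).2] with τ hτ
    refine intervalIntegral.integral_congr fun s hs => ?_
    rw [uIcc_of_le hτ.1.le] at hs
    simp only [hFeq s ⟨hs.1, hs.2.trans hτ.2.le⟩]
  exact hν.isAntitoneKernel_nubar.nonneg_of_hasDerivAt_causalConv hF hF0 ht₀pos hFfirst hFD
    (hDcont.continuousAt (Ioo_mem_nhds ht₀I.1 ht₀I.2))
end

section
/- For every a > 0 and z > 0, one has ∫_0^∞ s^{−1/2} exp(−a²/(2s) − z s) ds = √(π/z) · e^{−a√(2z)}. -/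
/-!
Substituting `s = t²` turns the integral into
`2 e^{-a√(2z)} ∫₀^∞ exp (-(√z t - (a/√2)/t)²) dt`, a Cauchy–Schlömilch integral:
`u = A t - B / t` maps `(0, ∞)` bijectively onto `ℝ` with `du = (A + B / t²) dt`, while the
involution `t ↦ (B / A) / t` flips the sign of `u` and carries `A dt` to `(B / t²) dt`.
Hence for an even integrable `f`, `2A ∫₀^∞ f (A t - B / t) dt = ∫ f`, and the Gaussian gives
`∫₀^∞ exp (-(A t - B / t)²) dt = √π / (2A)`.
-/

open MeasureTheory Real Set

variable {E : Type*} [NormedAddCommGroup E] [NormedSpace ℝ E]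

theorem integral_Ioi_comp_sq (g : ℝ → E) :
    ∫ t in Ioi 0, (2 * t) • g (t ^ 2) = ∫ s in Ioi 0, g s := by
  rw [← integral_comp_rpow_Ioi_of_pos (g := g) two_pos]
  refine setIntegral_congr_fun measurableSet_Ioi fun t _ => ?_
  norm_num [rpow_two]

theorem integral_Ioi_comp_div (g : ℝ → E) {c : ℝ} (hc : 0 < c) :
    ∫ t in Ioi 0, (c / t ^ 2) • g (c / t) = ∫ t in Ioi 0, g t := by
  have hderiv : ∀ t ∈ Ioi (0 : ℝ), HasDerivWithinAt (c / ·) (-(c / t ^ 2)) (Ioi 0) t :=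
    fun t ht => (((hasDerivAt_const t c).div (hasDerivAt_id' t) (ne_of_gt ht)).congr_deriv
      (by ring)).hasDerivWithinAt
  have hinj : InjOn (c / ·) (Ioi (0 : ℝ)) := fun s _ t _ hst => by
    simpa [div_div_cancel₀ hc.ne'] using congrArg (c / ·) hst
  have himage : (c / ·) '' Ioi (0 : ℝ) = Ioi 0 := by
    refine (image_subset_iff.2 fun t ht => div_pos hc ht).antisymm fun t ht => ?_
    exact ⟨c / t, div_pos hc ht, div_div_cancel₀ hc.ne'⟩
  conv_rhs =>
    rw [← himage, integral_image_eq_integral_abs_deriv_smul measurableSet_Ioi hderiv hinj]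
  refine setIntegral_congr_fun measurableSet_Ioi fun t ht => ?_
  rw [abs_neg, abs_of_pos (div_pos hc (pow_pos ht 2))]

theorem hasDerivAt_mul_sub_div (A B : ℝ) {t : ℝ} (ht : t ≠ 0) :
    HasDerivAt (fun t => A * t - B / t) (A + B / t ^ 2) t :=
  (((hasDerivAt_id' t).const_mul A).sub
    ((hasDerivAt_const t B).div (hasDerivAt_id' t) ht)).congr_deriv (by ring)

section CauchySchlomilch

variable {A B : ℝ}

theorem strictMonoOn_mul_sub_div (hA : 0 < A) (hB : 0 ≤ B) :
    StrictMonoOn (fun t => A * t - B / t) (Ioi 0) := fun s hs t _ hst => by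
  have := div_le_div_of_nonneg_left hB hs hst.le
  have := mul_lt_mul_of_pos_left hst hA
  dsimp only
  linarith

theorem image_mul_sub_div_Ioi (hA : 0 < A) (hB : 0 < B) :
    (fun t => A * t - B / t) '' Ioi 0 = univ := by
  refine eq_univ_of_forall fun y => ?_
  -- the positive root of `A t² - y t - B = 0`
  set d := √(y ^ 2 + 4 * A * B)
  have hd : d ^ 2 = y ^ 2 + 4 * A * B := sq_sqrt (by positivity)
  have hyd : 0 < y + d := by
    have : |y| < d := by
      rw [← sqrt_sq_eq_abs]; exact sqrt_lt_sqrt (sq_nonneg y) (by linarith [mul_pos hA hB])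
    linarith [neg_abs_le y]
  refine ⟨(y + d) / (2 * A), div_pos hyd (by positivity), ?_⟩
  field_simp
  linear_combination hd

theorem integral_Ioi_smul_comp_mul_sub_div (hA : 0 < A) (hB : 0 < B) (f : ℝ → E) :
    ∫ t in Ioi 0, (A + B / t ^ 2) • f (A * t - B / t) = ∫ u, f u := by
  have := integral_image_eq_integral_abs_deriv_smul measurableSet_Ioi
    (fun t ht => (hasDerivAt_mul_sub_div A B (ne_of_gt ht)).hasDerivWithinAt)
    (strictMonoOn_mul_sub_div hA hB.le).injOn f
  rw [image_mul_sub_div_Ioi hA hB, setIntegral_univ] at this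
  rw [this]
  exact setIntegral_congr_fun measurableSet_Ioi fun t _ => by rw [abs_of_pos (by positivity)]

theorem integrableOn_Ioi_smul_comp_mul_sub_div_iff (hA : 0 < A) (hB : 0 < B) (f : ℝ → E) :
    IntegrableOn (fun t => (A + B / t ^ 2) • f (A * t - B / t)) (Ioi 0) ↔ Integrable f := by
  have := integrableOn_image_iff_integrableOn_abs_deriv_smul measurableSet_Ioi
    (fun t ht => (hasDerivAt_mul_sub_div A B (ne_of_gt ht)).hasDerivWithinAt)
    (strictMonoOn_mul_sub_div hA hB.le).injOn f
  rw [image_mul_sub_div_Ioi hA hB, integrableOn_univ] at this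
  rw [this]
  exact integrableOn_congr_fun (fun t _ => by rw [abs_of_pos (by positivity)]) measurableSet_Ioi

theorem integral_Ioi_div_sq_smul_comp_mul_sub_div (hA : 0 < A) (hB : 0 < B) {f : ℝ → E}
    (hf : f.Even) :
    ∫ t in Ioi 0, (B / t ^ 2) • f (A * t - B / t) =
      A • ∫ t in Ioi 0, f (A * t - B / t) := by
  rw [← integral_Ioi_comp_div _ (div_pos hB hA), ← integral_smul]
  refine setIntegral_congr_fun measurableSet_Ioi fun t ht => ?_
  have ht₀ : t ≠ 0 := ne_of_gt ht
  have hflip : A * (B / A / t) - B / (B / A / t) = -(A * t - B / t) := by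
    field_simp
    ring
  rw [hflip, hf, smul_smul]
  congr 1
  field_simp

theorem integrableOn_Ioi_comp_mul_sub_div (hA : 0 < A) (hB : 0 < B) {f : ℝ → E}
    (hf : Integrable f) : IntegrableOn (fun t => f (A * t - B / t)) (Ioi 0) := by
  have hweighted := (integrableOn_Ioi_smul_comp_mul_sub_div_iff hA hB f).2 hf
  refine IntegrableOn.congr_fun (hweighted.bdd_smul (φ := fun t => (A + B / t ^ 2)⁻¹) A⁻¹
    (by fun_prop : Measurable _).aestronglyMeasurable (ae_of_all _ fun t => ?_))
    (fun t _ => ?_) measurableSet_Ioi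
  · rw [norm_inv, Real.norm_of_nonneg (by positivity)]
    exact inv_anti₀ hA (le_add_of_nonneg_right (by positivity))
  · have : A + B / t ^ 2 ≠ 0 := by positivity
    simp [smul_smul, inv_mul_cancel₀ this]

theorem integral_Ioi_comp_mul_sub_div (hA : 0 < A) (hB : 0 < B) {f : ℝ → E}
    (hf : Integrable f) (heven : f.Even) :
    ∫ t in Ioi 0, f (A * t - B / t) = (2 * A)⁻¹ • ∫ u, f u := by
  have hg := integrableOn_Ioi_comp_mul_sub_div hA hB hf
  have hgA : IntegrableOn (fun t => A • f (A * t - B / t)) (Ioi 0) := hg.smul A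
  have hgB : IntegrableOn (fun t => (B / t ^ 2) • f (A * t - B / t)) (Ioi 0) :=
    (((integrableOn_Ioi_smul_comp_mul_sub_div_iff hA hB f).2 hf).sub hgA).congr_fun
      (fun t _ => by simp only [Pi.sub_apply, add_smul, add_sub_cancel_left]) measurableSet_Ioi
  rw [← integral_Ioi_smul_comp_mul_sub_div hA hB f]
  simp_rw [add_smul]
  rw [integral_add hgA hgB, integral_smul,
    integral_Ioi_div_sq_smul_comp_mul_sub_div hA hB heven, ← add_smul, smul_smul, ← two_mul,
    inv_mul_cancel₀ (by positivity), one_smul]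

end CauchySchlomilch

theorem integral_Ioi_exp_neg_sq_mul_sub_div {A B : ℝ} (hA : 0 < A) (hB : 0 < B) :
    ∫ t in Ioi 0, exp (-(A * t - B / t) ^ 2) = √π / (2 * A) := by
  have hgauss : ∫ u, exp (-u ^ 2) = √π := by simpa using integral_gaussian 1
  rw [integral_Ioi_comp_mul_sub_div (f := fun u => exp (-u ^ 2)) hA hB
    (by simpa using integrable_exp_neg_mul_sq one_pos) (fun u => by simp), hgauss,
    smul_eq_mul, inv_mul_eq_div]

theorem smul_rpow_neg_half_mul_exp_eq {a z t : ℝ} (hz : 0 ≤ z) (ht : 0 < t) :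
    (2 * t) • ((t ^ 2) ^ (-(1:ℝ)/2) * exp (-(a ^ 2 / (2 * t ^ 2)) - z * t ^ 2))
      = 2 * exp (-(a * √(2 * z))) * exp (-(√z * t - a / √2 / t) ^ 2) := by
  have hinv : (t ^ 2) ^ (-(1:ℝ)/2) = t⁻¹ := by
    rw [neg_div, rpow_neg (sq_nonneg t), ← sqrt_eq_rpow, sqrt_sq ht.le]
  have hexp :
      -(a ^ 2 / (2 * t ^ 2)) - z * t ^ 2 = -(a * √(2 * z)) + -(√z * t - a / √2 / t) ^ 2 := by
    have h2 : √2 ^ 2 = 2 := sq_sqrt zero_le_two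
    rw [sqrt_mul zero_le_two]
    field_simp
    linear_combination
      (2 * a * t ^ 2 * √2 * √z - a ^ 2) * h2 + 2 * t ^ 4 * √2 ^ 2 * sq_sqrt hz
  rw [smul_eq_mul, hinv, hexp, exp_add]
  field_simp

/-- for every `a > 0` and `z > 0`,
`∫_0^∞ s^{-1/2} exp(-a²/(2s) - z s) ds = √(π/z) · e^{-a√(2z)}`. -/
theorem stmt_8 (a z : ℝ) (ha : 0 < a) (hz : 0 < z) :
    ∫ s in Set.Ioi (0:ℝ), s ^ (-(1:ℝ)/2) * Real.exp (-(a ^ 2 / (2 * s)) - z * s)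
      = Real.sqrt (Real.pi / z) * Real.exp (-(a * Real.sqrt (2 * z))) := by
  rw [← integral_Ioi_comp_sq, setIntegral_congr_fun measurableSet_Ioi
    fun t ht => smul_rpow_neg_half_mul_exp_eq hz.le ht, integral_const_mul,
    integral_Ioi_exp_neg_sq_mul_sub_div (sqrt_pos.2 hz) (by positivity), sqrt_div' _ hz.le]
  field_simp
end

section
/- Let ν be a Lévy measure satisfying Orey's condition with exponent γ ∈ (0,2), constant C_γ > 0 and threshold r₀ > 0, and let Re Ψ(ξ) = ∫_{(0,∞)} (1 − cos(ξs)) ν(ds). Then there exist M > 0 and c > 0 such that Re Ψ(ξ) ≥ c ξ^{2−γ} for all ξ > M. -/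
open MeasureTheory Real Set

lemma one_sub_cos_le_abs' (x : ℝ) : 1 - Real.cos x ≤ |x| := by
  have h : Real.cos (2 * (x/2)) = Real.cos (x/2)^2 - Real.sin (x/2)^2 := Real.cos_two_mul' (x/2)
  have h2 : Real.sin (x/2)^2 + Real.cos (x/2)^2 = 1 := Real.sin_sq_add_cos_sq _
  have h3 : 1 - Real.cos x = 2 * Real.sin (x/2)^2 := by
    have : (2 : ℝ) * (x/2) = x := by ring
    rw [this] at h; linarith
  have h4 : |Real.sin (x/2)| ≤ |x/2| := Real.abs_sin_le_abs
  have h5 : |Real.sin (x/2)| ≤ 1 := Real.abs_sin_le_one _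
  have h6 : Real.sin (x/2)^2 ≤ |x/2| := by
    calc Real.sin (x/2)^2 = |Real.sin (x/2)| * |Real.sin (x/2)| := by rw [← abs_mul, ← sq, abs_sq]
    _ ≤ 1 * |x/2| := mul_le_mul h5 h4 (abs_nonneg _) one_pos.le
    _ = |x/2| := one_mul _
  rw [h3]
  calc 2 * Real.sin (x/2)^2 ≤ 2 * |x/2| := by linarith
    _ = |x| := by rw [abs_div]; simp [abs_of_nonneg]; ring

/-- if `ν` is a Lévy measure satisfying Orey's condition
(`∫_{(0,r)} s² ν(ds) > C_γ r^γ` for all `0 < r < r₀`) with exponent `γ ∈ (0,2)`,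
then there are `M > 0` and `c > 0` such that
`Re Ψ(ξ) = ∫ (1 - cos(ξs)) ν(ds) ≥ c ξ^{2-γ}` for all `ξ > M`. -/
theorem stmt_10 (ν : Measure ℝ) (hν : IsLevyMeasure ν)
    (γ Cγ r₀ : ℝ) (hγ : γ ∈ Set.Ioo (0:ℝ) 2) (hCγ : 0 < Cγ) (hr₀ : 0 < r₀)
    (hOrey : ∀ r : ℝ, 0 < r → r < r₀ →
      Cγ * r ^ γ < ∫ s in Set.Ioo (0:ℝ) r, s ^ 2 ∂ν) :
    ∃ M > (0:ℝ), ∃ c > (0:ℝ), ∀ ξ : ℝ, M < ξ →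
      c * ξ ^ (2 - γ) ≤ ∫ s in Set.Ioi (0:ℝ), (1 - Real.cos (ξ * s)) ∂ν := by
  obtain ⟨-, hfin⟩ := hν
  have hπ : (0:ℝ) < π := Real.pi_pos
  -- integrability of min s 1 on Ioi 0
  have hmin : IntegrableOn (fun s => min s 1) (Set.Ioi (0:ℝ)) ν := by
    refine ⟨(measurable_id.min measurable_const).aestronglyMeasurable, ?_⟩
    have hnn : ∀ᵐ s ∂ν.restrict (Set.Ioi (0:ℝ)), 0 ≤ min s 1 := by
      rw [ae_restrict_iff' measurableSet_Ioi]
      exact Filter.Eventually.of_forall fun s hs => le_min hs.le one_pos.le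
    rw [hasFiniteIntegral_iff_ofReal hnn]
    exact lt_top_iff_ne_top.mpr hfin
  set M : ℝ := max (1/r₀) 1 with hM
  have hM0 : (0:ℝ) < M := lt_of_lt_of_le one_pos (le_max_right _ _)
  refine ⟨M, hM0, (2/π^2) * Cγ, by positivity, fun ξ hξ => ?_⟩
  have hξ1 : (1:ℝ) < ξ := lt_of_le_of_lt (le_max_right _ _) hξ
  have hξ0 : (0:ℝ) < ξ := lt_trans one_pos hξ1
  set r : ℝ := 1/ξ with hrdef
  have hr0 : 0 < r := by positivity
  have hr1 : r < 1 := by rw [hrdef]; rw [div_lt_one hξ0]; exact hξ1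
  have hrr₀ : r < r₀ := by
    have h1 : 1/r₀ < ξ := lt_of_le_of_lt (le_max_left _ _) hξ
    rw [hrdef, div_lt_iff₀ hξ0]
    have h2 : (1:ℝ) < ξ * r₀ := by
      calc (1:ℝ) = (1/r₀) * r₀ := by field_simp
      _ < ξ * r₀ := mul_lt_mul_of_pos_right h1 hr₀
    linarith [mul_comm ξ r₀, h2]
  -- integrability of 1 - cos (ξ s) on Ioi 0
  have hf : IntegrableOn (fun s => 1 - Real.cos (ξ * s)) (Set.Ioi (0:ℝ)) ν := by
    refine Integrable.mono' (hmin.const_mul (max ξ 2))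
      (continuous_const.sub (Real.continuous_cos.comp (continuous_const.mul continuous_id))).aestronglyMeasurable ?_
    rw [ae_restrict_iff' measurableSet_Ioi]
    refine Filter.Eventually.of_forall fun s hs => ?_
    have hs0 : 0 < s := hs
    have hcos : Real.cos (ξ * s) ≤ 1 := Real.cos_le_one _
    have hcos2 : -1 ≤ Real.cos (ξ * s) := Real.neg_one_le_cos _
    rw [Real.norm_eq_abs, abs_of_nonneg (by linarith)]
    rcases le_total s 1 with h1 | h1
    · have := one_sub_cos_le_abs' (ξ * s)
      rw [abs_of_nonneg (by positivity)] at this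
      calc 1 - Real.cos (ξ * s) ≤ ξ * s := this
      _ ≤ max ξ 2 * min s 1 := by
        rw [min_eq_left h1]
        exact mul_le_mul_of_nonneg_right (le_max_left _ _) hs0.le
    · calc 1 - Real.cos (ξ * s) ≤ 2 := by linarith
      _ ≤ max ξ 2 * min s 1 := by
        rw [min_eq_right h1, mul_one]; exact le_max_right _ _
  -- integrability of s^2 on Ioo 0 r
  have hsq : IntegrableOn (fun s : ℝ => s ^ 2) (Set.Ioo (0:ℝ) r) ν := by
    refine Integrable.mono' (hmin.mono_set Set.Ioo_subset_Ioi_self)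
      (continuous_pow 2).aestronglyMeasurable ?_
    rw [ae_restrict_iff' measurableSet_Ioo]
    refine Filter.Eventually.of_forall fun s hs => ?_
    have hs0 : 0 < s := hs.1
    have hs1 : s ≤ 1 := le_of_lt (lt_trans hs.2 hr1)
    rw [Real.norm_eq_abs, abs_of_nonneg (by positivity), min_eq_left hs1]
    nlinarith
  -- pointwise lower bound on Ioo 0 r
  have key : ∫ s in Set.Ioo (0:ℝ) r, (2/π^2 * ξ^2) * s ^ 2 ∂ν
      ≤ ∫ s in Set.Ioo (0:ℝ) r, (1 - Real.cos (ξ * s)) ∂ν := by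
    refine setIntegral_mono_on (hsq.const_mul _) (hf.mono_set Set.Ioo_subset_Ioi_self)
      measurableSet_Ioo fun s hs => ?_
    have hs0 : 0 < s := hs.1
    have hξs1 : ξ * s < 1 := by
      have := hs.2
      rw [hrdef] at this
      calc ξ * s < ξ * (1/ξ) := by exact mul_lt_mul_of_pos_left this hξ0
      _ = 1 := by field_simp
    have habs : |ξ * s| ≤ π := by
      rw [abs_of_nonneg (by positivity)]
      linarith [Real.pi_gt_three]
    have := Real.cos_le_one_sub_mul_cos_sq habs
    calc 2/π^2 * ξ^2 * s ^ 2 = 2/π^2 * (ξ * s)^2 := by ring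
    _ ≤ 1 - Real.cos (ξ * s) := by linarith
  have orey := hOrey r hr0 hrr₀
  have step2 : 2/π^2 * ξ^2 * (Cγ * r ^ γ) ≤ ∫ s in Set.Ioo (0:ℝ) r, (2/π^2 * ξ^2) * s ^ 2 ∂ν := by
    rw [integral_const_mul]
    have hc : (0:ℝ) < 2/π^2 * ξ^2 := by positivity
    exact mul_le_mul_of_nonneg_left orey.le hc.le
  have step4 : ∫ s in Set.Ioo (0:ℝ) r, (1 - Real.cos (ξ * s)) ∂ν
      ≤ ∫ s in Set.Ioi (0:ℝ), (1 - Real.cos (ξ * s)) ∂ν := by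
    refine setIntegral_mono_set hf ?_ (HasSubset.Subset.eventuallyLE Set.Ioo_subset_Ioi_self)
    refine Filter.Eventually.of_forall fun s => ?_
    have := Real.cos_le_one (ξ * s)
    simp only [Pi.zero_apply]; linarith
  have hrw : 2/π^2 * ξ^2 * (Cγ * r ^ γ) = (2/π^2 * Cγ) * ξ ^ (2 - γ) := by
    have hξγ : (0:ℝ) < ξ ^ γ := Real.rpow_pos_of_pos hξ0 γ
    rw [hrdef, one_div, Real.inv_rpow hξ0.le, Real.rpow_sub hξ0, ← Real.rpow_two ξ]
    field_simp
  linarith [hrw ▸ (step2.trans (key.trans step4))]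
end
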